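/- arXiv:1702.08849 — 3 statements merged into one kernel-verified Lean document; each statement's English description precedes it below -/
import Mathlib

section
/- With the setup of the factorization lemma, if a target distribution is defined by π(γ) ∝ 1_Γ(γ) ∏_{i=1}^{P} ηᵢ(γᵢ) with all ηᵢ(γᵢ) > 0, then the full conditional of row n given the other rows satisfies πₙ(γₙ | γ_{n̄}) ∝ ηₙ(γₙ) ∏_{s=1}^{S} ∏_{i≠n} (1 − 1_{{1:M⁽ˢ⁾}}(γₙ⁽ˢ⁾)·δ_{γₙ⁽ˢ⁾}[γᵢ⁽ˢ⁾]), whenever γ_{n̄} is positive 1-1. -/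
open scoped Classical

/-- A row is valid if it is either all `-1` or all nonnegative with entries bounded by `M`. -/
def validRow (S : ℕ) (M : Fin S → ℕ) (r : Fin S → ℤ) : Prop :=
  (∀ s, r s = -1) ∨ (∀ s, 0 ≤ r s ∧ r s ≤ (M s : ℤ))

/-- Positive 1-1 property: no two distinct rows share the same positive value in a column. -/
def pos11 {P S : ℕ} (γ : Fin P → Fin S → ℤ) : Prop :=
  ∀ s : Fin S, ∀ i i' : Fin P, i ≠ i' → 0 < γ i s → γ i s ≠ γ i' s

/-- Positive 1-1 property of the array with row `n` deleted. -/
def pos11Except {P S : ℕ} (n : Fin P) (γ : Fin P → Fin S → ℤ) : Prop :=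
  ∀ s : Fin S, ∀ i i' : Fin P, i ≠ n → i' ≠ n → i ≠ i' → 0 < γ i s → γ i s ≠ γ i' s

/-- Unnormalized target distribution `π(γ) = 1_Γ(γ) ∏ᵢ ηᵢ(γᵢ)`. -/
noncomputable def piU {P S : ℕ} (M : Fin S → ℕ)
    (η : Fin P → (Fin S → ℤ) → ℝ) (γ : Fin P → Fin S → ℤ) : ℝ :=
  (if (∀ i, validRow S M (γ i)) ∧ pos11 γ then (1 : ℝ) else 0) * ∏ i, η i (γ i)

/-- The finite set of valid rows. -/
noncomputable def rowFinset (S : ℕ) (M : Fin S → ℕ) : Finset (Fin S → ℤ) :=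
  (Fintype.piFinset fun s => Finset.Icc (-1 : ℤ) (M s)).filter (validRow S M)

/-- Full conditional of row `n` given all the other rows: `π(γ)/π(γ_{n̄})`. -/
noncomputable def condRow {P S : ℕ} (M : Fin S → ℕ)
    (η : Fin P → (Fin S → ℤ) → ℝ) (γ : Fin P → Fin S → ℤ) (n : Fin P)
    (r : Fin S → ℤ) : ℝ :=
  piU M η (Function.update γ n r) /
    ∑ r' ∈ rowFinset S M, piU M η (Function.update γ n r')

theorem stmt_1 {P S : ℕ} (hP : 0 < P) (hS : 0 < S) (M : Fin S → ℕ)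
    (η : Fin P → (Fin S → ℤ) → ℝ)
    (hη : ∀ (i : Fin P) (r : Fin S → ℤ), validRow S M r → 0 < η i r)
    (γ : Fin P → Fin S → ℤ) (n : Fin P)
    (hrows : ∀ i, validRow S M (γ i))
    (hbar : pos11Except n γ) :
    ∃ c : ℝ, 0 < c ∧ ∀ r ∈ rowFinset S M,
      condRow M η γ n r =
        c * (η n r *
          ∏ s : Fin S, ∏ i ∈ Finset.univ.erase n,
            (1 - (if 1 ≤ r s ∧ r s ≤ (M s : ℤ) then (1 : ℝ) else 0) *
                  (if γ i s = r s then (1 : ℝ) else 0))) := by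
  classical
  set D : ℝ := ∏ i ∈ Finset.univ.erase n, η i (γ i) with hD
  have hDpos : 0 < D := Finset.prod_pos (fun i _ => hη i (γ i) (hrows i))
  -- evaluation of piU at an updated row
  have hval : ∀ r ∈ rowFinset S M, piU M η (Function.update γ n r)
      = D * (η n r * ∏ s : Fin S, ∏ i ∈ Finset.univ.erase n,
          (1 - (if 1 ≤ r s ∧ r s ≤ (M s : ℤ) then (1:ℝ) else 0) *
               (if γ i s = r s then (1:ℝ) else 0))) := by
    intro r hr
    have hrv : validRow S M r := (Finset.mem_filter.mp hr).2
    have hvalid : ∀ i, validRow S M (Function.update γ n r i) := by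
      intro i
      by_cases h : i = n
      · subst h; simpa using hrv
      · simpa [Function.update_of_ne h] using hrows i
    -- each factor is a boolean indicator
    have hfac : ∀ (s : Fin S) (i : Fin P),
        (1 - (if 1 ≤ r s ∧ r s ≤ (M s : ℤ) then (1:ℝ) else 0) *
             (if γ i s = r s then (1:ℝ) else 0))
        = if ¬ (0 < r s ∧ γ i s = r s) then (1:ℝ) else 0 := by
      intro s i
      have hb : (1 ≤ r s ∧ r s ≤ (M s : ℤ)) ↔ 0 < r s := by
        rcases hrv with h | h
        · have := h s; constructor <;> intro hh <;> omega
        · have := h s; constructor <;> intro hh <;> [omega; exact ⟨by omega, this.2⟩]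
      by_cases h1 : 0 < r s <;> by_cases h2 : γ i s = r s <;>
        simp [hb, h1, h2]
    have hprod : (∏ s : Fin S, ∏ i ∈ Finset.univ.erase n,
          (1 - (if 1 ≤ r s ∧ r s ≤ (M s : ℤ) then (1:ℝ) else 0) *
               (if γ i s = r s then (1:ℝ) else 0)))
        = if (∀ s : Fin S, ∀ i ∈ Finset.univ.erase n,
              ¬ (0 < r s ∧ γ i s = r s)) then (1:ℝ) else 0 := by
      calc (∏ s : Fin S, ∏ i ∈ Finset.univ.erase n,
          (1 - (if 1 ≤ r s ∧ r s ≤ (M s : ℤ) then (1:ℝ) else 0) *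
               (if γ i s = r s then (1:ℝ) else 0)))
          = ∏ s : Fin S, ∏ i ∈ Finset.univ.erase n,
              (if ¬ (0 < r s ∧ γ i s = r s) then (1:ℝ) else 0) := by
            refine Finset.prod_congr rfl fun s _ => Finset.prod_congr rfl fun i _ => hfac s i
        _ = ∏ s : Fin S, (if (∀ i ∈ Finset.univ.erase n,
              ¬ (0 < r s ∧ γ i s = r s)) then (1:ℝ) else 0) := by
            refine Finset.prod_congr rfl fun s _ => ?_
            by_cases h : ∀ i ∈ Finset.univ.erase n, ¬(0 < r s ∧ γ i s = r s) <;>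
              simp [Finset.prod_boole, h]
        _ = _ := by
            by_cases h : ∀ s : Fin S, ∀ i ∈ Finset.univ.erase n,
                ¬(0 < r s ∧ γ i s = r s) <;>
              simp [Finset.prod_boole, h]
    -- the indicator condition matches
    have hIff : ((∀ i, validRow S M (Function.update γ n r i)) ∧
          pos11 (Function.update γ n r)) ↔
        (∀ s : Fin S, ∀ i ∈ Finset.univ.erase n, ¬ (0 < r s ∧ γ i s = r s)) := by
      constructor
      · rintro ⟨-, hp⟩ s i hi ⟨hpos, heq⟩
        have hin : i ≠ n := (Finset.mem_erase.mp hi).1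
        have := hp s n i (Ne.symm hin) (by simpa using hpos)
        simp only [Function.update_self, Function.update_of_ne hin] at this
        exact this heq.symm
      · intro H
        refine ⟨hvalid, ?_⟩
        intro s i i' hne hpos
        by_cases hiN : i = n
        · have hi'n : i' ≠ n := fun h => hne (by rw [hiN, h])
          rw [hiN, Function.update_self] at hpos
          rw [hiN, Function.update_self, Function.update_of_ne hi'n]
          intro heq
          exact H s i' (Finset.mem_erase.mpr ⟨hi'n, Finset.mem_univ _⟩) ⟨hpos, heq.symm⟩
        · by_cases hi'N : i' = n
          · subst hi'N
            rw [Function.update_of_ne hiN] at hpos ⊢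
            rw [Function.update_self]
            intro heq
            have hposr : 0 < r s := heq ▸ hpos
            exact H s i (Finset.mem_erase.mpr ⟨hiN, Finset.mem_univ _⟩) ⟨hposr, heq⟩
          · rw [Function.update_of_ne hiN] at hpos ⊢
            rw [Function.update_of_ne hi'N]
            exact hbar s i i' hiN hi'N hne hpos
    have hηprod : (∏ i, η i (Function.update γ n r i)) = η n r * D := by
      rw [← Finset.mul_prod_erase Finset.univ _ (Finset.mem_univ n),
        Function.update_self]
      congr 1
      refine Finset.prod_congr rfl fun i hi => ?_
      rw [Function.update_of_ne (Finset.mem_erase.mp hi).1]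
    rw [piU, hηprod, hprod, if_congr hIff rfl rfl]
    ring
  -- the normalizing constant is positive
  set Z : ℝ := ∑ r' ∈ rowFinset S M, piU M η (Function.update γ n r') with hZ
  have hZpos : 0 < Z := by
    have hnonneg : ∀ r' ∈ rowFinset S M, 0 ≤ piU M η (Function.update γ n r') := by
      intro r' hr'
      rw [hval r' hr']
      have h1 : 0 < η n r' := hη n r' (Finset.mem_filter.mp hr').2
      have h2 : (0:ℝ) ≤ ∏ s : Fin S, ∏ i ∈ Finset.univ.erase n,
          (1 - (if 1 ≤ r' s ∧ r' s ≤ (M s : ℤ) then (1:ℝ) else 0) *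
               (if γ i s = r' s then (1:ℝ) else 0)) := by
        refine Finset.prod_nonneg fun s _ => Finset.prod_nonneg fun i _ => ?_
        by_cases h1 : 1 ≤ r' s ∧ r' s ≤ (M s : ℤ) <;> by_cases h2 : γ i s = r' s <;>
          simp [h1, h2]
      positivity
    have hmem : (fun _ : Fin S => (-1 : ℤ)) ∈ rowFinset S M := by
      refine Finset.mem_filter.mpr ⟨?_, Or.inl fun s => rfl⟩
      refine Fintype.mem_piFinset.mpr fun s => ?_
      simp [Finset.mem_Icc]
    have hpos : 0 < piU M η (Function.update γ n (fun _ => (-1 : ℤ))) := by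
      rw [hval _ hmem]
      have h1 : 0 < η n (fun _ => (-1 : ℤ)) := hη n _ (Or.inl fun s => rfl)
      have h2 : (∏ s : Fin S, ∏ i ∈ Finset.univ.erase n,
          (1 - (if 1 ≤ (-1:ℤ) ∧ (-1:ℤ) ≤ (M s : ℤ) then (1:ℝ) else 0) *
               (if γ i s = -1 then (1:ℝ) else 0))) = 1 := by
        refine Finset.prod_eq_one fun s _ => Finset.prod_eq_one fun i _ => ?_
        norm_num
      rw [h2]
      simp only [mul_one]
      positivity
    exact Finset.sum_pos' hnonneg ⟨_, hmem, hpos⟩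
  refine ⟨D / Z, div_pos hDpos hZpos, fun r hr => ?_⟩
  rw [condRow, ← hZ, hval r hr]
  field_simp
end

section
/- If the Gibbs sampler with transition kernel π(γ'|γ) = ∏_{n=1}^{P} πₙ(γₙ' | γ'_{1:n-1}, γ_{n+1:P}) is started from a positive 1-1 array γ ∈ Γ, then every iterate of the chain is also a positive 1-1 array (Γ is closed under the transition kernel: π(γ'|γ) > 0 implies γ' ∈ Γ). -/
open scoped Classical

open scoped Classical

/-- The hybrid array used in the Gibbs sweep: rows up to `n` come from the new
array `γ'`, rows after `n` from the old array `γ`. -/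
def hybrid {P S : ℕ} (γ γ' : Fin P → Fin S → ℤ) (n : Fin P) :
    Fin P → Fin S → ℤ :=
  fun i => if i ≤ n then γ' i else γ i

/-- Gibbs transition kernel `π(γ'|γ) = ∏ₙ πₙ(γ'ₙ | γ'_{1:n-1}, γ_{n+1:P})`. -/
noncomputable def gibbsKernel {P S : ℕ} (M : Fin S → ℕ)
    (η : Fin P → (Fin S → ℤ) → ℝ) (γ γ' : Fin P → Fin S → ℤ) : ℝ :=
  ∏ n : Fin P,
    (piU M η (hybrid γ γ' n) /
      ∑ r ∈ rowFinset S M, piU M η (Function.update (hybrid γ γ' n) n r))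

theorem stmt_3 {P S : ℕ} (hP : 0 < P) (hS : 0 < S) (M : Fin S → ℕ)
    (η : Fin P → (Fin S → ℤ) → ℝ)
    (hη : ∀ (i : Fin P) (r : Fin S → ℤ), validRow S M r → 0 < η i r)
    (γ γ' : Fin P → Fin S → ℤ)
    (hγ : (∀ i, validRow S M (γ i)) ∧ pos11 γ)
    (hpos : 0 < gibbsKernel M η γ γ') :
    (∀ i, validRow S M (γ' i)) ∧ pos11 γ' := by
  set n₀ : Fin P := ⟨P - 1, Nat.sub_lt hP one_pos⟩ with hn₀
  have hlast : hybrid γ γ' n₀ = γ' := by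
    funext i
    have : i ≤ n₀ := by
      simp only [Fin.le_def, hn₀]
      omega
    simp [hybrid, this]
  have hne : gibbsKernel M η γ γ' ≠ 0 := ne_of_gt hpos
  rw [gibbsKernel, Finset.prod_ne_zero_iff] at hne
  have hfac := hne n₀ (Finset.mem_univ _)
  rw [hlast] at hfac
  have hnum : piU M η γ' ≠ 0 := by
    intro h
    rw [h, zero_div] at hfac
    exact hfac rfl
  by_contra hcond
  apply hnum
  rw [piU, if_neg hcond, zero_mul]
end

section
/- Under the bijection between pairs (I₊, θ₊) and positive 1-1 arrays γ, the GLMB update weight factorizes over rows: ω_{Z₊}^{(I,ξ,I₊,θ₊)} = 1_Γ(γ) ∏_{i=1}^{P} ηᵢ(γᵢ), where ηᵢ(γᵢ) equals 1−P̄_S(ℓᵢ) if i ≤ R and γᵢ ≺ 0; P̄_S(ℓᵢ)ψ̄(ℓᵢ, γᵢ) if i ≤ R and γᵢ ⪰ 0; 1−r_B(ℓᵢ) if i > R and γᵢ ≺ 0; and r_B(ℓᵢ)ψ̄(ℓᵢ, γᵢ) if i > R and γᵢ ⪰ 0. Hence, sampling pairs (I₊,θ₊) with probability proportional to ω_{Z₊}^{(I,ξ,I₊,θ₊)}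 is equivalent to sampling arrays γ with probability proportional to 1_Γ(γ)∏ᵢηᵢ(γᵢ). -/
open scoped Classical

/-- The set `I₊` recovered from the array: rows that are (all) nonnegative. -/
def Iplus {P S : ℕ} (γ : Fin P → Fin S → ℤ) : Finset (Fin P) :=
  Finset.univ.filter fun i => ∀ s, 0 ≤ γ i s

/-- The GLMB update weight
`ω = 1_{Θ₊(I₊)}(θ₊)[1−P̄_S]^{I−I₊}[P̄_S]^{I∩I₊}[1−r_B]^{𝔹₊−I₊}[r_B]^{𝔹₊∩I₊}[ψ̄^{(θ₊)}]^{I₊}`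
expressed through the array `γ`, where `I = {ℓ₁,...,ℓ_R}` corresponds to rows
`i < R` and `𝔹₊ = {ℓ_{R+1},...,ℓ_P}` to rows `i ≥ R`. -/
noncomputable def glmbWeight {P S : ℕ} (R : ℕ)
    (PS rB : Fin P → ℝ) (ψ : Fin P → (Fin S → ℤ) → ℝ)
    (γ : Fin P → Fin S → ℤ) : ℝ :=
  (if pos11 γ then (1 : ℝ) else 0) *
    (∏ i ∈ Finset.univ.filter fun i : Fin P => (i : ℕ) < R ∧ i ∉ Iplus γ, (1 - PS i)) *
    (∏ i ∈ Finset.univ.filter fun i : Fin P => (i : ℕ) < R ∧ i ∈ Iplus γ, PS i) *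
    (∏ i ∈ Finset.univ.filter fun i : Fin P => R ≤ (i : ℕ) ∧ i ∉ Iplus γ, (1 - rB i)) *
    (∏ i ∈ Finset.univ.filter fun i : Fin P => R ≤ (i : ℕ) ∧ i ∈ Iplus γ, rB i) *
    (∏ i ∈ Iplus γ, ψ i (γ i))

/-- The row factors `ηᵢ`. -/
noncomputable def etaRow {P S : ℕ} (R : ℕ)
    (PS rB : Fin P → ℝ) (ψ : Fin P → (Fin S → ℤ) → ℝ)
    (i : Fin P) (r : Fin S → ℤ) : ℝ :=
  if (i : ℕ) < R then
    (if ∀ s, 0 ≤ r s then PS i * ψ i r else 1 - PS i)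
  else
    (if ∀ s, 0 ≤ r s then rB i * ψ i r else 1 - rB i)

theorem stmt_7 {P S : ℕ} (hS : 0 < S) (R : ℕ) (hR : R ≤ P)
    (M : Fin S → ℕ)
    (PS rB : Fin P → ℝ)
    (hPS : ∀ i, 0 < PS i ∧ PS i < 1) (hrB : ∀ i, 0 < rB i ∧ rB i < 1)
    (ψ : Fin P → (Fin S → ℤ) → ℝ) (hψ : ∀ i r, 0 < ψ i r)
    (γ : Fin P → Fin S → ℤ)
    (hrows : ∀ i, (∀ s, γ i s = -1) ∨ (∀ s, 0 ≤ γ i s ∧ γ i s ≤ (M s : ℤ))) :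
    glmbWeight R PS rB ψ γ =
      (if pos11 γ then (1 : ℝ) else 0) * ∏ i : Fin P, etaRow R PS rB ψ i (γ i) := by
  have key : ∀ i : Fin P, etaRow R PS rB ψ i (γ i) =
      (if (i : ℕ) < R ∧ i ∉ Iplus γ then 1 - PS i else 1) *
      (if (i : ℕ) < R ∧ i ∈ Iplus γ then PS i else 1) *
      (if R ≤ (i : ℕ) ∧ i ∉ Iplus γ then 1 - rB i else 1) *
      (if R ≤ (i : ℕ) ∧ i ∈ Iplus γ then rB i else 1) *
      (if i ∈ Iplus γ then ψ i (γ i) else 1) := by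
    intro i
    have hmem : i ∈ Iplus γ ↔ ∀ s, 0 ≤ γ i s := by simp [Iplus]
    unfold etaRow
    by_cases h1 : (i : ℕ) < R <;> by_cases h2 : i ∈ Iplus γ
    · rw [if_pos h1, if_pos (hmem.mp h2)]
      simp [h1, h2, not_le.mpr h1]
    · rw [if_pos h1, if_neg (fun h => h2 (hmem.mpr h))]
      simp [h1, h2, not_le.mpr h1]
    · rw [if_neg h1, if_pos (hmem.mp h2)]
      simp [h1, h2, not_lt.mp h1]
    · rw [if_neg h1, if_neg (fun h => h2 (hmem.mpr h))]
      simp [h1, h2, not_lt.mp h1]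
  rw [Finset.prod_congr rfl (fun i _ => key i)]
  simp only [Finset.prod_mul_distrib]
  unfold glmbWeight
  rw [← Finset.prod_filter, ← Finset.prod_filter, ← Finset.prod_filter,
    ← Finset.prod_filter, ← Finset.prod_filter]
  have : Finset.univ.filter (fun i : Fin P => i ∈ Iplus γ) = Iplus γ := by
    simp
  rw [this]
  ring
end
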